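/- Let x* ≠ 0 be a global minimizer of E(x) = ‖x‖₁ - α‖x‖₂ + l(x), where l has L-Lipschitz gradient, α > 0, and ‖x*‖₂ < α/L. Then x* is 1-sparse, and for its nonzero component i, ∇_i l(x*) = (α - 1)·sign(x*_i). -/

import Mathlib

open Finset Filter Set
open scoped RealInnerProductSpace

noncomputable def norm1 {N : ℕ} (x : EuclideanSpace ℝ (Fin N)) : ℝ := ∑ i, |x i|

noncomputable def normInf {N : ℕ} (x : EuclideanSpace ℝ (Fin N)) : ℝ := ⨆ i, |x i|

noncomputable def Fobj {N : ℕ} (a lam : ℝ) (y x : EuclideanSpace ℝ (Fin N)) : ℝ :=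
  norm1 x - a * ‖x‖ + 1 / (2 * lam) * ‖x - y‖ ^ 2

open Topology

/-!
Write `h = ‖·‖₁ - α‖·‖`. Because `∇l` is `L`-Lipschitz, `l(x + d) + l(x - d) ≤ 2 l(x) + L‖d‖²`, so
the minimiser satisfies `2 h(x*) ≤ h(x* + d) + h(x* - d) + L‖d‖²` for every `d`. If `x*` had two
nonzero coordinates `i ≠ j`, take `d = t (x*ⱼ eᵢ - x*ᵢ eⱼ)`: it is orthogonal to `x*` and for small
`t` changes no sign, so the `ℓ₁` terms cancel and `‖x* ± d‖ = r` with `r² = ‖x*‖² + ‖d‖²`. What is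
left is `2α (r - ‖x*‖) ≤ L (r² - ‖x*‖²)`, i.e. `2α ≤ L (r + ‖x*‖)`, which tends to `2α ≤ 2L‖x*‖`
as `t → 0`, contradicting `‖x*‖ < α / L`.

For the gradient, `h` is positively homogeneous, so `t ↦ (h + l)(t x*)` is stationary at `t = 1`:
`h(x*) + ⟪∇l(x*), x*⟫ = 0`. For `x* = c eᵢ` this reads `(1 - α)|c| + c ∂ᵢl(x*) = 0`.
-/

section LipschitzGradient

variable {E : Type*} [NormedAddCommGroup E] [InnerProductSpace ℝ E] [CompleteSpace E]
  {l : E → ℝ} {g : E → E} {L : ℝ}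

theorem HasGradientAt.hasDerivAt_comp_add_smul {g' x d : E} {t : ℝ}
    (h : HasGradientAt l g' (x + t • d)) :
    HasDerivAt (fun s : ℝ => l (x + s • d)) ⟪g', d⟫ t := by
  have hline : HasDerivAt (fun s : ℝ => x + s • d) d t := by
    simpa using ((hasDerivAt_id t).smul_const d).const_add x
  simpa [Function.comp_def] using h.hasFDerivAt.comp_hasDerivAt t hline

theorem le_add_inner_add_sq_of_lipschitz_gradient (hg : ∀ z, HasGradientAt l (g z) z)
    (hLip : ∀ z w, ‖g z - g w‖ ≤ L * ‖z - w‖) (x d : E) :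
    l (x + d) ≤ l x + ⟪g x, d⟫ + L / 2 * ‖d‖ ^ 2 := by
  set φ : ℝ → ℝ := fun t => l (x + t • d) - t * ⟪g x, d⟫ - L / 2 * ‖d‖ ^ 2 * t ^ 2
  have hφ : ∀ t, HasDerivAt φ (⟪g (x + t • d) - g x, d⟫ - L * ‖d‖ ^ 2 * t) t := by
    intro t
    have h := (((hg (x + t • d)).hasDerivAt_comp_add_smul).sub
      ((hasDerivAt_id t).mul_const ⟪g x, d⟫)).sub ((hasDerivAt_pow 2 t).const_mul (L / 2 * ‖d‖ ^ 2))
    exact h.congr_deriv (by rw [inner_sub_left]; push_cast; ring)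
  have hanti : AntitoneOn φ (Icc 0 1) := by
    refine antitoneOn_of_deriv_nonpos (convex_Icc 0 1)
      (fun t _ => (hφ t).continuousAt.continuousWithinAt)
      (fun t _ => (hφ t).differentiableAt.differentiableWithinAt) fun t ht => ?_
    rw [interior_Icc] at ht
    rw [(hφ t).deriv, sub_nonpos]
    calc ⟪g (x + t • d) - g x, d⟫ ≤ ‖g (x + t • d) - g x‖ * ‖d‖ := real_inner_le_norm _ _
      _ ≤ L * ‖t • d‖ * ‖d‖ := by
        gcongr
        simpa using hLip (x + t • d) x
      _ = L * ‖d‖ ^ 2 * t := by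
        rw [norm_smul, Real.norm_of_nonneg ht.1.le]
        ring
  have h01 := hanti (left_mem_Icc.2 zero_le_one) (right_mem_Icc.2 zero_le_one) zero_le_one
  simp only [φ, one_smul, zero_smul, add_zero, one_mul, zero_mul, sub_zero, one_pow, mul_one,
    ne_eq, OfNat.ofNat_ne_zero, not_false_eq_true, zero_pow, mul_zero] at h01
  linarith

theorem add_add_sub_le_of_lipschitz_gradient (hg : ∀ z, HasGradientAt l (g z) z)
    (hLip : ∀ z w, ‖g z - g w‖ ≤ L * ‖z - w‖) (x d : E) :
    l (x + d) + l (x - d) ≤ 2 * l x + L * ‖d‖ ^ 2 := by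
  have hplus := le_add_inner_add_sq_of_lipschitz_gradient hg hLip x d
  have hminus := le_add_inner_add_sq_of_lipschitz_gradient hg hLip x (-d)
  rw [← sub_eq_add_neg, inner_neg_right, norm_neg] at hminus
  linarith

theorem two_mul_le_add_add_sq_of_forall_le (hg : ∀ z, HasGradientAt l (g z) z)
    (hLip : ∀ z w, ‖g z - g w‖ ≤ L * ‖z - w‖) {h : E → ℝ} {x : E}
    (hmin : ∀ z, h x + l x ≤ h z + l z) (d : E) :
    2 * h x ≤ h (x + d) + h (x - d) + L * ‖d‖ ^ 2 := by
  linarith [add_add_sub_le_of_lipschitz_gradient hg hLip x d, hmin (x + d), hmin (x - d)]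

theorem add_inner_eq_zero_of_forall_le {h : E → ℝ} {x g' : E}
    (hh : ∀ t > 0, h (t • x) = t * h x) (hl : HasGradientAt l g' x)
    (hmin : ∀ z, h x + l x ≤ h z + l z) : h x + ⟪g', x⟫ = 0 := by
  set φ : ℝ → ℝ := fun t => t * h x + l (t • x)
  have hderiv : HasDerivAt φ (h x + ⟪g', x⟫) 1 := by
    have hl' : HasGradientAt l g' (0 + (1 : ℝ) • x) := by simpa using hl
    have hsum := ((hasDerivAt_id (1 : ℝ)).mul_const (h x)).add hl'.hasDerivAt_comp_add_smul
    simpa [φ, Pi.add_def] using hsum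
  have hlocal : IsLocalMin φ 1 := by
    filter_upwards [lt_mem_nhds one_pos] with t ht
    simpa [φ, hh t ht] using hmin (t • x)
  exact hlocal.hasDerivAt_eq_zero hderiv

end LipschitzGradient

theorem abs_add_add_abs_sub_of_abs_le {u v : ℝ} (h : |v| ≤ |u|) : |u + v| + |u - v| = 2 * |u| := by
  rcases abs_le.mp h with ⟨h₁, h₂⟩
  rcases le_total 0 u with hu | hu
  · rw [abs_of_nonneg hu] at h₁ h₂ ⊢
    rw [abs_of_nonneg (by linarith), abs_of_nonneg (by linarith)]
    ring
  · rw [abs_of_nonpos hu] at h₁ h₂ ⊢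
    rw [abs_of_nonpos (by linarith), abs_of_nonpos (by linarith)]
    ring

section EuclideanSpace

variable {N : ℕ}

theorem norm1_smul (t : ℝ) (x : EuclideanSpace ℝ (Fin N)) : norm1 (t • x) = |t| * norm1 x := by
  simp [norm1, abs_mul, Finset.mul_sum]

theorem norm1_add_add_norm1_sub {x d : EuclideanSpace ℝ (Fin N)} (h : ∀ k, |d k| ≤ |x k|) :
    norm1 (x + d) + norm1 (x - d) = 2 * norm1 x := by
  simp only [norm1, ← Finset.sum_add_distrib, Finset.mul_sum, PiLp.add_apply, PiLp.sub_apply]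
  exact Finset.sum_congr rfl fun k _ => abs_add_add_abs_sub_of_abs_le (h k)

theorem eventually_abs_mul_apply_le {x d : EuclideanSpace ℝ (Fin N)}
    (h : ∀ k, x k = 0 → d k = 0) : ∀ᶠ t in 𝓝 (0 : ℝ), ∀ k, |t * d k| ≤ |x k| := by
  refine Filter.eventually_all.2 fun k => ?_
  by_cases hk : x k = 0
  · simp [hk, h k hk]
  · have hcont : Tendsto (fun t : ℝ => |t * d k|) (𝓝 0) (𝓝 0) := by
      simpa using ((continuous_id.mul (continuous_const (y := d k))).abs).tendsto 0
    exact hcont.eventually (ge_mem_nhds (abs_pos.2 hk))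

variable {i : Fin N} {x : EuclideanSpace ℝ (Fin N)}

theorem norm1_of_forall_ne_eq_zero (hx : ∀ k ≠ i, x k = 0) : norm1 x = |x i| :=
  Finset.sum_eq_single i (fun k _ hk => by simp [hx k hk]) (by simp)

theorem norm_of_forall_ne_eq_zero (hx : ∀ k ≠ i, x k = 0) : ‖x‖ = |x i| := by
  rw [EuclideanSpace.norm_eq, Finset.sum_eq_single i (fun k _ hk => by simp [hx k hk]) (by simp),
    Real.norm_eq_abs, Real.sqrt_sq (abs_nonneg _)]

theorem inner_of_forall_ne_eq_zero (hx : ∀ k ≠ i, x k = 0) (y : EuclideanSpace ℝ (Fin N)) :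
    ⟪y, x⟫ = y i * x i := by
  rw [PiLp.inner_apply, Finset.sum_eq_single i (fun k _ hk => by simp [hx k hk]) (by simp)]
  simp [mul_comm]

end EuclideanSpace

section SparseMinimizer

variable {N : ℕ} {a L : ℝ} {l : EuclideanSpace ℝ (Fin N) → ℝ}
  {g : EuclideanSpace ℝ (Fin N) → EuclideanSpace ℝ (Fin N)} {xs : EuclideanSpace ℝ (Fin N)}

theorem le_mul_norm_of_inner_eq_zero (hg : ∀ z, HasGradientAt l (g z) z)
    (hLip : ∀ z w, ‖g z - g w‖ ≤ L * ‖z - w‖)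
    (hmin : ∀ z, norm1 xs - a * ‖xs‖ + l xs ≤ norm1 z - a * ‖z‖ + l z)
    {d : EuclideanSpace ℝ (Fin N)} (hd : d ≠ 0) (hxd : ⟪xs, d⟫ = 0)
    (hsupp : ∀ k, xs k = 0 → d k = 0) : a ≤ L * ‖xs‖ := by
  have hnear : ∀ᶠ t in 𝓝[≠] (0 : ℝ), 2 * a ≤ L * (‖xs + t • d‖ + ‖xs‖) := by
    filter_upwards [self_mem_nhdsWithin, nhdsWithin_le_nhds (eventually_abs_mul_apply_le hsupp)]
      with t ht hdom
    have hperp : ⟪xs, t • d⟫ = 0 := by rw [real_inner_smul_right, hxd, mul_zero]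
    have hplus := norm_add_sq_eq_norm_sq_add_norm_sq_real hperp
    have hminus := norm_sub_sq_eq_norm_sq_add_norm_sq_real hperp
    have hsym : ‖xs - t • d‖ = ‖xs + t • d‖ :=
      (mul_self_inj (norm_nonneg _) (norm_nonneg _)).1 (hminus.trans hplus.symm)
    have hnorm1 : norm1 (xs + t • d) + norm1 (xs - t • d) = 2 * norm1 xs :=
      norm1_add_add_norm1_sub fun k => by simpa using hdom k
    have hsecond := two_mul_le_add_add_sq_of_forall_le (h := fun z => norm1 z - a * ‖z‖)
      hg hLip hmin (t • d)
    have hgrow : ‖xs‖ < ‖xs + t • d‖ := by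
      have : 0 < ‖t • d‖ := norm_pos_iff.2 (smul_ne_zero ht hd)
      exact (mul_self_lt_mul_self_iff (norm_nonneg _) (norm_nonneg _)).2 (by nlinarith)
    have hsq : ‖t • d‖ ^ 2 = (‖xs + t • d‖ - ‖xs‖) * (‖xs + t • d‖ + ‖xs‖) := by
      linear_combination -hplus
    rw [hsym, hsq] at hsecond
    refine le_of_mul_le_mul_left ?_ (sub_pos.2 hgrow)
    linarith
  have hlim : Tendsto (fun t : ℝ => L * (‖xs + t • d‖ + ‖xs‖)) (𝓝[≠] 0)
      (𝓝 (L * (‖xs‖ + ‖xs‖))) := by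
    have hcont : Continuous fun t : ℝ => L * (‖xs + t • d‖ + ‖xs‖) := by fun_prop
    simpa using (hcont.tendsto 0).mono_left nhdsWithin_le_nhds
  linarith [ge_of_tendsto hlim hnear]

theorem eq_of_apply_ne_zero_of_mul_norm_lt (hg : ∀ z, HasGradientAt l (g z) z)
    (hLip : ∀ z w, ‖g z - g w‖ ≤ L * ‖z - w‖)
    (hmin : ∀ z, norm1 xs - a * ‖xs‖ + l xs ≤ norm1 z - a * ‖z‖ + l z)
    (hsmall : L * ‖xs‖ < a) {i j : Fin N} (hi : xs i ≠ 0) (hj : xs j ≠ 0) : i = j := by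
  by_contra hij
  set d := EuclideanSpace.single i (xs j) - EuclideanSpace.single j (xs i)
  have hdi : d i = xs j := by simp [d, hij]
  refine hsmall.not_ge (le_mul_norm_of_inner_eq_zero hg hLip hmin (d := d) ?_ ?_ ?_)
  · exact fun h => hj (by simpa [h] using hdi.symm)
  · simp [d, inner_sub_right, EuclideanSpace.inner_single_right, mul_comm]
  · intro k hk
    have hki : k ≠ i := fun h => hi (h ▸ hk)
    have hkj : k ≠ j := fun h => hj (h ▸ hk)
    simp [d, hki, hkj]

theorem apply_eq_mul_sign_of_forall_ne_eq_zero {g' : EuclideanSpace ℝ (Fin N)}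
    (hg : HasGradientAt l g' xs)
    (hmin : ∀ z, norm1 xs - a * ‖xs‖ + l xs ≤ norm1 z - a * ‖z‖ + l z)
    {i : Fin N} (hi : xs i ≠ 0) (hxs : ∀ k ≠ i, xs k = 0) : g' i = (a - 1) * Real.sign (xs i) := by
  have hhom : ∀ t > 0, norm1 (t • xs) - a * ‖t • xs‖ = t * (norm1 xs - a * ‖xs‖) := by
    intro t ht
    rw [norm1_smul, norm_smul, Real.norm_of_nonneg ht.le, abs_of_pos ht]
    ring
  have hstat := add_inner_eq_zero_of_forall_le (h := fun z => norm1 z - a * ‖z‖) hhom hg hmin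
  simp only [norm1_of_forall_ne_eq_zero hxs, norm_of_forall_ne_eq_zero hxs,
    inner_of_forall_ne_eq_zero hxs] at hstat
  rcases hi.lt_or_gt with hneg | hpos
  · rw [abs_of_neg hneg] at hstat
    have h := (mul_eq_zero.1 (by linarith : (g' i + (a - 1)) * xs i = 0)).resolve_right hi
    rw [Real.sign_of_neg hneg]
    linarith
  · rw [abs_of_pos hpos] at hstat
    have h := (mul_eq_zero.1 (by linarith : (g' i - (a - 1)) * xs i = 0)).resolve_right hi
    rw [Real.sign_of_pos hpos]
    linarith

end SparseMinimizer

theorem stmt13_general {N : ℕ} (a L : ℝ) (hL : 0 < L)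
    (l : EuclideanSpace ℝ (Fin N) → ℝ)
    (g : EuclideanSpace ℝ (Fin N) → EuclideanSpace ℝ (Fin N))
    (hg : ∀ z, HasGradientAt l (g z) z)
    (hLip : ∀ z w, ‖g z - g w‖ ≤ L * ‖z - w‖)
    (xs : EuclideanSpace ℝ (Fin N)) (hxs : xs ≠ 0) (hsmall : ‖xs‖ < a / L)
    (hmin : ∀ z, norm1 xs - a * ‖xs‖ + l xs ≤ norm1 z - a * ‖z‖ + l z) :
    (∃! i, xs i ≠ 0) ∧ ∀ i, xs i ≠ 0 → g xs i = (a - 1) * Real.sign (xs i) := by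
  have hunique : ∀ {i j}, xs i ≠ 0 → xs j ≠ 0 → i = j :=
    eq_of_apply_ne_zero_of_mul_norm_lt hg hLip hmin (by rwa [lt_div_iff₀' hL] at hsmall)
  obtain ⟨i, hi⟩ : ∃ i, xs i ≠ 0 := by
    by_contra! h
    exact hxs (by ext k; simpa using h k)
  refine ⟨⟨i, hi, fun j hj => hunique hj hi⟩, fun j hj => ?_⟩
  exact apply_eq_mul_sign_of_forall_ne_eq_zero (hg xs) hmin hj
    fun k hk => by_contra fun hk' => hk (hunique hk' hj)

theorem stmt13 {N : ℕ} (a L : ℝ) (ha : 0 < a) (hL : 0 < L)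
    (l : EuclideanSpace ℝ (Fin N) → ℝ)
    (g : EuclideanSpace ℝ (Fin N) → EuclideanSpace ℝ (Fin N))
    (hg : ∀ z, HasGradientAt l (g z) z)
    (hLip : ∀ z w, ‖g z - g w‖ ≤ L * ‖z - w‖)
    (xs : EuclideanSpace ℝ (Fin N)) (hxs : xs ≠ 0) (hsmall : ‖xs‖ < a / L)
    (hmin : ∀ z, norm1 xs - a * ‖xs‖ + l xs ≤ norm1 z - a * ‖z‖ + l z) :
    (∃! i, xs i ≠ 0) ∧ ∀ i, xs i ≠ 0 → g xs i = (a - 1) * Real.sign (xs i) :=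
  stmt13_general a L hL l g hg hLip xs hxs hsmall hmin
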